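/- arXiv:1703.04834 — 3 statements merged into one kernel-verified Lean document; each statement's English description precedes it below -/
import Mathlib

section
/- For every weak deterministic Büchi automaton 𝒜 over a finite alphabet A such that every state of 𝒜 equals δ(q₀,u) for some finite word u, there exist a weak deterministic Büchi automaton 𝒜' over A that is minimal and all of whose states equal δ'(q₀',u) for some finite word u, together with a surjective map μ from the states of 𝒜 onto the states of 𝒜' such that μ(q₀) = q₀' and L(𝒜_q) = L(𝒜'_{μ(q)}) for every state q of 𝒜; in particular L(𝒜') = L(𝒜). -/
/-!
Language equivalence of states is a congruence of a deterministic automaton, so it can be divided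
out; a class is made accepting when it contains an accepting state lying on a cycle. This is sound
because in a weak automaton two equivalent states lying on cycles are both accepting or both
rejecting. Otherwise pick an equivalent cyclic state `s` whose strongly connected component is
terminal among those of such states. Reading from `s` the periodic word of the accepting cycle, the
run eventually cycles through an equivalent accepting state, and reading that of the rejecting
cycle, through an equivalent rejecting state; both lie in the component of `s`, contradicting
weakness.
-/

/-- A deterministic Büchi automaton over alphabet `A` with states `Q`. -/
structure DBA (A : Type) (Q : Type) where
  delta : Q → A → Q
  init : Q
  F : Set Q

namespace DBA

variable {A Q : Type}

/-- The transition function extended to finite words. -/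
def deltaStar (M : DBA A Q) : Q → List A → Q
  | q, [] => q
  | q, a :: u => deltaStar M (M.delta q a) u

/-- The run of `M` on the infinite word `w`. -/
def run (M : DBA A Q) (w : ℕ → A) : ℕ → Q
  | 0 => M.init
  | n + 1 => M.delta (run M w n) (w n)

/-- `M` accepts `w` if some accepting state occurs infinitely often in the run. -/
def Accepts (M : DBA A Q) (w : ℕ → A) : Prop :=
  ∃ q ∈ M.F, ∀ N : ℕ, ∃ n, N ≤ n ∧ run M w n = q

/-- The ω-language of `M`. -/
def Lang (M : DBA A Q) : Set (ℕ → A) := {w | M.Accepts w}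

/-- `M` with initial state changed to `q`. -/
def start (M : DBA A Q) (q : Q) : DBA A Q := { M with init := q }

/-- `q'` is accessible from `q` (by a nonempty word). -/
def Reach (M : DBA A Q) (q q' : Q) : Prop :=
  ∃ u : List A, u ≠ [] ∧ deltaStar M q u = q'

/-- `M` is weak: `F` is a union of strongly connected components. -/
def Weak (M : DBA A Q) : Prop :=
  ∀ q ∈ M.F, ∀ q', M.Reach q q' → M.Reach q' q → q' ∈ M.F

/-- `M` is minimal: distinct states recognize distinct languages. -/
def Minimal (M : DBA A Q) : Prop :=
  ∀ q q' : Q, q ≠ q' → (M.start q).Lang ≠ (M.start q').Lang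

end DBA

/-- Concatenation of a finite word and an infinite word. -/
def cat {A : Type} (u : List A) (w : ℕ → A) : ℕ → A :=
  fun n => if h : n < u.length then u.get ⟨n, h⟩ else w (n - u.length)

/-- The value `⟨v⟩ = Σ_{i<|v|} v[i]·b^(|v|-1-i)` of a finite digit word. -/
noncomputable def natVal (b : ℕ) (v : List (Fin b)) : ℝ :=
  ∑ i : Fin v.length, ((v.get i : ℕ) : ℝ) * (b : ℝ) ^ (v.length - 1 - (i : ℕ))

/-- The fractional value `⟨w⟩_f = Σ_{i≥0} w[i]·b^(-i-1)` of an infinite digit word. -/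
noncomputable def fracVal (b : ℕ) (w : ℕ → Fin b) : ℝ :=
  ∑' i : ℕ, ((w i : ℕ) : ℝ) * (b : ℝ) ^ (-(i : ℤ) - 1)

/-- The word `𝐮⋆𝐰` over `Σ^d ∪ {⋆}`; `none` is the separator `⋆`. -/
def encWord {b d : ℕ} (u : List (Fin d → Fin b)) (w : ℕ → Fin d → Fin b) :
    ℕ → Option (Fin d → Fin b) :=
  cat (u.map some ++ [none]) (fun n => some (w n))

/-- The vector of reals encoded by `𝐮⋆𝐰`. -/
noncomputable def vecVal {b d : ℕ} (u : List (Fin d → Fin b)) (w : ℕ → Fin d → Fin b) :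
    Fin d → ℝ :=
  fun i => natVal b (u.map fun t => t i) + fracVal b (fun n => w n i)

/-- A language of words over `Σ^d ∪ {⋆}` is saturated if membership only depends on
the encoded vector of reals. -/
def Saturated {b d : ℕ} (L : Set (ℕ → Option (Fin d → Fin b))) : Prop :=
  ∀ (u : List (Fin d → Fin b)) (w : ℕ → Fin d → Fin b)
    (u' : List (Fin d → Fin b)) (w' : ℕ → Fin d → Fin b),
    vecVal u w = vecVal u' w' → encWord u w ∈ L → encWord u' w' ∈ L

/-- The parallelization `par(𝒜)` of an automaton over `Σ ∪ {⋆}`. -/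
def parDBA {Q : Type} {b : ℕ} (d : ℕ) (M : DBA (Option (Fin b)) Q) :
    DBA (Option (Fin d → Fin b)) Q where
  delta := fun q x =>
    match x with
    | none => M.delta q none
    | some t => M.deltaStar q (List.ofFn fun i => some (t i))
  init := M.init
  F := M.F

/-- Fill the `f`-th component of a tuple of `Σ^□_f` with the digit `z`. -/
def fixTuple {b d : ℕ} (f : Fin d) (z : Fin b) (t : {i : Fin d // i ≠ f} → Fin b) :
    Fin d → Fin b :=
  fun i => if h : i = f then z else t ⟨i, h⟩

/-- The automaton `𝒜^{z@f}` over `Σ^□_f ∪ {⋆}`; a letter of `Σ^□_f` is represented by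
its tuple of non-`f` components (the `f`-th component being `□`). -/
def fixDBA {Q : Type} {b d : ℕ} (M : DBA (Option (Fin d → Fin b)) Q) (f : Fin d) (z : Fin b) :
    DBA (Option ({i : Fin d // i ≠ f} → Fin b)) Q where
  delta := fun q x =>
    match x with
    | none => M.delta q none
    | some t => M.delta q (some (fixTuple f z t))
  init := M.init
  F := M.F

/-- `fix_{□@f}(𝐰)`: replace the `f`-th component of every non-`⋆` letter by `□`. -/
def eraseComp {b d : ℕ} (f : Fin d) (w : ℕ → Option (Fin d → Fin b)) :
    ℕ → Option ({i : Fin d // i ≠ f} → Fin b) :=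
  fun n => (w n).map fun t i => t i.val

/-- `fix_{z@f}(𝐰)`: replace the `f`-th component (`□`) of every non-`⋆` letter by `z`. -/
def fillComp {b d : ℕ} (f : Fin d) (z : Fin b) (w : ℕ → Option ({i : Fin d // i ≠ f} → Fin b)) :
    ℕ → Option (Fin d → Fin b) :=
  fun n => (w n).map (fixTuple f z)

/-- The automaton `𝒜^{seq z}`, over alphabet `Σ ∪ {□,⋆}` (here `none` is `⋆` and
`some none` is `□`), with states `(Q × {0,…,d−1}) ∪ {⊥}` (`none` is `⊥`). -/
def seqDBA {Q : Type} {b : ℕ} (d : ℕ) (hd : 0 < d) (M : DBA (Option (Fin b)) Q) (z : Fin b) :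
    DBA (Option (Option (Fin b))) (Option (Q × Fin d)) where
  delta := fun s x =>
    match s, x with
    | none, _ => none
    | some (q, i), none => some (M.delta q none, i)
    | some (q, i), some (some a) =>
        if h : (i : ℕ) + 1 < d then some (M.delta q (some a), ⟨(i : ℕ) + 1, h⟩) else none
    | some (q, i), some none =>
        if (i : ℕ) = d - 1 then some (M.delta q (some z), ⟨0, hd⟩) else none
  init := some (M.init, ⟨0, hd⟩)
  F := {s | ∃ q ∈ M.F, ∃ i : Fin d, s = some (q, i)}

/-- Auxiliary function for flattening an infinite word of blocks:
`flatAux blk v n` is the pair (block index, offset inside the block) of position `n`. -/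
def flatAux {A B : Type} (blk : A → List B) (v : ℕ → A) : ℕ → ℕ × ℕ
  | 0 => (0, 0)
  | n + 1 =>
      let p := flatAux blk v n
      if p.2 + 1 < (blk (v p.1)).length then (p.1, p.2 + 1) else (p.1 + 1, 0)

/-- Flattening of an infinite word of (nonempty) blocks. -/
def flatten {A B : Type} [Inhabited B] (blk : A → List B) (v : ℕ → A) : ℕ → B :=
  fun n => (blk (v (flatAux blk v n).1)).getD (flatAux blk v n).2 default

/-- The block of a letter of `Σ^d ∪ {⋆}`: a `d`-tuple becomes its list of components,
`⋆` stays a single letter. -/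
def parBlock {b d : ℕ} : Option (Fin d → Fin b) → List (Option (Fin b))
  | none => [none]
  | some t => List.ofFn fun i => some (t i)

/-- `seq(𝐯)`: the sequentialization of an infinite word over `Σ^d ∪ {⋆}`. -/
def seqWord {b d : ℕ} (v : ℕ → Option (Fin d → Fin b)) : ℕ → Option (Fin b) :=
  flatten parBlock v

/-- The block of a letter of `Σ^□_f ∪ {⋆}`, as a word over `Σ ∪ {□,⋆}`. -/
def sqBlock {b d : ℕ} (f : Fin d) :
    Option ({i : Fin d // i ≠ f} → Fin b) → List (Option (Option (Fin b)))
  | none => [none]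
  | some t => List.ofFn fun i : Fin d =>
      if h : i = f then some none else some (some (t ⟨i, h⟩))

/-- Number of non-`⋆` letters among the first `n` letters of `w`. -/
def digitCount {b : ℕ} (w : ℕ → Option (Fin b)) : ℕ → ℕ
  | 0 => 0
  | n + 1 => digitCount w n + (if w n = none then 0 else 1)

open Filter Function

theorem Function.exists_isPeriodicPt_iterate {α : Type*} [Finite α] (f : α → α) (x : α) :
    ∃ k p, 0 < p ∧ IsPeriodicPt f p (f^[k] x) := by
  obtain ⟨i, j, hne, heq⟩ := Finite.exists_ne_map_eq_of_infinite (f^[·] x)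
  wlog hij : i < j generalizing i j
  · exact this j i hne.symm heq.symm (by omega)
  refine ⟨i, j - i, by omega, ?_⟩
  rw [IsPeriodicPt, IsFixedPt, ← iterate_add_apply, Nat.sub_add_cancel hij.le]
  exact heq.symm

def omegaPow {A : Type} (u : List A) (hu : u ≠ []) : ℕ → A :=
  fun n => u[n % u.length]'(Nat.mod_lt _ (List.length_pos_iff.2 hu))

namespace DBA

variable {A Q : Type}

theorem deltaStar_append (M : DBA A Q) (q : Q) (u v : List A) :
    M.deltaStar q (u ++ v) = M.deltaStar (M.deltaStar q u) v := by
  induction u generalizing q with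
  | nil => rfl
  | cons a u ih => exact ih (M.delta q a)

theorem Reach.trans {M : DBA A Q} {a b c : Q} (hab : M.Reach a b) (hbc : M.Reach b c) :
    M.Reach a c := by
  obtain ⟨u, hu, rfl⟩ := hab
  obtain ⟨v, -, rfl⟩ := hbc
  exact ⟨u ++ v, by simp [hu], deltaStar_append ..⟩

variable (M : DBA A Q)

theorem iterate_deltaStar (x : List A) (n : ℕ) (q : Q) :
    (M.deltaStar · x)^[n] q = M.deltaStar q (List.replicate n x).flatten := by
  induction n generalizing q with
  | zero => rfl
  | succ n ih =>
    rw [iterate_succ_apply, ih, List.replicate_succ, List.flatten_cons, deltaStar_append]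

theorem reach_iterate_deltaStar {x : List A} (hx : x ≠ []) (q : Q) {n : ℕ} (hn : 0 < n) :
    M.Reach q ((M.deltaStar · x)^[n] q) :=
  ⟨_, by simp [hx, hn.ne'], (M.iterate_deltaStar x n q).symm⟩

@[simp]
theorem deltaStar_start (p q : Q) (u : List A) : (M.start p).deltaStar q u = M.deltaStar q u := by
  induction u generalizing q with
  | nil => rfl
  | cons a u ih => exact ih _

@[simp]
theorem reach_start (p q q' : Q) : (M.start p).Reach q q' ↔ M.Reach q q' := by
  simp [Reach]

theorem Weak.start {M : DBA A Q} (hweak : M.Weak) (p : Q) : (M.start p).Weak :=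
  fun q hq q' h h' => hweak q hq q' (by simpa using h) (by simpa using h')

theorem accepts_iff_frequently (w : ℕ → A) :
    M.Accepts w ↔ ∃ q ∈ M.F, ∃ᶠ n in atTop, M.run w n = q := by
  simp only [Accepts, frequently_atTop]

theorem run_add (w : ℕ → A) (n k : ℕ) :
    M.run w (n + k) = M.deltaStar (M.run w n) (List.ofFn fun i : Fin k => w (n + i)) := by
  induction k with
  | zero => rfl
  | succ k ih =>
    rw [List.ofFn_succ', List.concat_eq_append, deltaStar_append]
    simp only [Fin.val_castSucc, Fin.val_last, ← ih]
    rfl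

theorem reach_run (w : ℕ → A) {n m : ℕ} (h : n < m) : M.Reach (M.run w n) (M.run w m) := by
  obtain ⟨k, rfl⟩ := Nat.exists_eq_add_of_lt h
  exact ⟨List.ofFn fun i : Fin (k + 1) => w (n + i), by simp, (M.run_add w n (k + 1)).symm⟩

theorem reach_of_frequently_run {w : ℕ → A} {s t : Q} (hs : ∃ᶠ n in atTop, M.run w n = s)
    (ht : ∃ᶠ n in atTop, M.run w n = t) : M.Reach s t := by
  obtain ⟨n, rfl⟩ := hs.exists
  obtain ⟨m, hm, rfl⟩ := frequently_atTop.1 ht (n + 1)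
  exact M.reach_run w (by omega)

theorem run_omegaPow (q : Q) {u : List A} (hu : u ≠ []) (n : ℕ) :
    (M.start q).run (omegaPow u hu) (n * u.length) = (M.deltaStar · u)^[n] q := by
  induction n with
  | zero => rw [Nat.zero_mul]; rfl
  | succ n ih =>
    have hword : (List.ofFn fun i : Fin u.length => omegaPow u hu (n * u.length + i)) = u := by
      simp [omegaPow, Nat.mod_eq_of_lt, List.ofFn_getElem]
    rw [Nat.succ_mul, run_add, ih, hword, iterate_succ_apply', deltaStar_start]

theorem frequently_run_omegaPow {s t : Q} {u : List A} (hu : u ≠ []) {k p : ℕ} (hp : 0 < p)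
    (ht : (M.deltaStar · u)^[k] s = t) (hper : IsPeriodicPt (M.deltaStar · u) p t) :
    ∃ᶠ n in atTop, (M.start s).run (omegaPow u hu) n = t := by
  refine frequently_atTop.2 fun N => ⟨(N * p + k) * u.length, ?_, ?_⟩
  · calc N ≤ N * p := Nat.le_mul_of_pos_right N hp
      _ ≤ N * p + k := Nat.le_add_right _ _
      _ ≤ (N * p + k) * u.length := Nat.le_mul_of_pos_right _ (List.length_pos_iff.2 hu)
  · rw [run_omegaPow, iterate_add_apply, ht]
    exact (hper.const_mul N).eq

theorem run_cons_succ (q : Q) (a : A) (w : ℕ → A) (n : ℕ) :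
    (M.start q).run (cat [a] w) (n + 1) = (M.start (M.delta q a)).run w n := by
  induction n with
  | zero => simp [run, start, cat]
  | succ n ih =>
    have hcat : cat [a] w (n + 1) = w n := by simp [cat]
    exact (congrArg₂ M.delta ih hcat :)

theorem accepts_cons (q : Q) (a : A) (w : ℕ → A) :
    (M.start q).Accepts (cat [a] w) ↔ (M.start (M.delta q a)).Accepts w := by
  rw [accepts_iff_frequently, accepts_iff_frequently]
  refine exists_congr fun f => and_congr_right fun _ => ?_
  simp only [← run_cons_succ]
  conv_lhs => rw [← map_add_atTop_eq_nat 1]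
  rw [frequently_map]

theorem lang_delta_congr {q r : Q} (h : (M.start q).Lang = (M.start r).Lang) (a : A) :
    (M.start (M.delta q a)).Lang = (M.start (M.delta r a)).Lang := by
  ext w
  exact (M.accepts_cons q a w).symm.trans ((Set.ext_iff.1 h _).trans (M.accepts_cons r a w))

theorem lang_deltaStar_congr {q r : Q} (h : (M.start q).Lang = (M.start r).Lang) (u : List A) :
    (M.start (M.deltaStar q u)).Lang = (M.start (M.deltaStar r u)).Lang := by
  induction u generalizing q r with
  | nil => exact h
  | cons a u ih => exact ih (M.lang_delta_congr h a)

theorem exists_reach_imp_reach [Finite Q] {S : Set Q} (hS : S.Nonempty) :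
    ∃ s ∈ S, ∀ t ∈ S, M.Reach s t → M.Reach t s := by
  let r : Q → Q → Prop := fun t s => M.Reach s t ∧ ¬M.Reach t s
  have : IsTrans Q r := ⟨fun _ _ _ h h' => ⟨h'.1.trans h.1, fun h'' => h'.2 (h.1.trans h'')⟩⟩
  have : Std.Irrefl r := ⟨fun _ h => h.2 h.1⟩
  obtain ⟨s, hs, hmin⟩ := (Finite.wellFounded_of_trans_of_irrefl r).has_min S hS
  exact ⟨s, hs, fun t ht hst => by_contra fun hts => hmin t ht ⟨hst, hts⟩⟩

theorem Weak.mem_F_of_frequently_run {M : DBA A Q} (hweak : M.Weak) {w : ℕ → A} {t : Q}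
    (hw : M.Accepts w) (ht : ∃ᶠ n in atTop, M.run w n = t) : t ∈ M.F := by
  obtain ⟨f, hf, hfreq⟩ := (M.accepts_iff_frequently w).1 hw
  exact hweak f hf t (M.reach_of_frequently_run hfreq ht) (M.reach_of_frequently_run ht hfreq)

theorem Weak.accepts_iff_of_frequently_run {M : DBA A Q} (hweak : M.Weak) {w : ℕ → A} {t : Q}
    (ht : ∃ᶠ n in atTop, M.run w n = t) : M.Accepts w ↔ t ∈ M.F :=
  ⟨fun hw => hweak.mem_F_of_frequently_run hw ht,
    fun htF => (M.accepts_iff_frequently w).2 ⟨t, htF, ht⟩⟩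

/-- `s'` is a state on which the run from `s` on `u^ω` eventually cycles. -/
theorem Weak.exists_reach_lang_eq {M : DBA A Q} [Finite Q] (hweak : M.Weak) {q s : Q}
    {u : List A} (hu : u ≠ []) (hq : M.deltaStar q u = q)
    (hs : (M.start s).Lang = (M.start q).Lang) :
    ∃ s', M.Reach s s' ∧ M.Reach s' s' ∧ (M.start s').Lang = (M.start q).Lang ∧
      (s' ∈ M.F ↔ q ∈ M.F) := by
  obtain ⟨k, p, hp, hper⟩ := exists_isPeriodicPt_iterate (M.deltaStar · u) (M.deltaStar s u)
  rw [← iterate_succ_apply] at hper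
  have hqfix : IsFixedPt (M.deltaStar · u) q := hq
  refine ⟨_, M.reach_iterate_deltaStar hu s k.succ_pos, ?_, ?_, ?_⟩
  · have := M.reach_iterate_deltaStar hu ((M.deltaStar · u)^[k + 1] s) hp
    rwa [hper.eq] at this
  · have := M.lang_deltaStar_congr hs (List.replicate (k + 1) u).flatten
    rwa [← iterate_deltaStar, ← iterate_deltaStar, hqfix.iterate] at this
  · have hacc_s := (hweak.start s).accepts_iff_of_frequently_run
      (M.frequently_run_omegaPow hu hp rfl hper)
    have hacc_q := (hweak.start q).accepts_iff_of_frequently_run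
      (M.frequently_run_omegaPow hu one_pos (k := 0) rfl hqfix)
    exact hacc_s.symm.trans ((Set.ext_iff.1 hs _).trans hacc_q)

theorem Weak.mem_F_of_lang_eq {M : DBA A Q} [Finite Q] (hweak : M.Weak) {q r : Q}
    (hq : q ∈ M.F) (hqq : M.Reach q q) (hrr : M.Reach r r)
    (hL : (M.start r).Lang = (M.start q).Lang) : r ∈ M.F := by
  by_contra hr
  obtain ⟨u, hu, hqu⟩ := hqq
  obtain ⟨v, hv, hrv⟩ := hrr
  obtain ⟨s, ⟨-, hsL⟩, hback⟩ := M.exists_reach_imp_reach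
    (S := {s | M.Reach s s ∧ (M.start s).Lang = (M.start q).Lang}) ⟨q, ⟨u, hu, hqu⟩, rfl⟩
  obtain ⟨s₁, hs₁, hs₁s₁, hs₁L, hs₁F⟩ := hweak.exists_reach_lang_eq hu hqu hsL
  obtain ⟨s₂, hs₂, hs₂s₂, hs₂L, hs₂F⟩ := hweak.exists_reach_lang_eq hv hrv (hsL.trans hL.symm)
  have hs₁s : M.Reach s₁ s := hback s₁ ⟨hs₁s₁, hs₁L⟩ hs₁
  have hs₂s : M.Reach s₂ s := hback s₂ ⟨hs₂s₂, hs₂L.trans hL⟩ hs₂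
  exact hr (hs₂F.1 (hweak s₁ (hs₁F.2 hq) s₂ (hs₁s.trans hs₂) (hs₂s.trans hs₁)))

def langSetoid : Setoid Q := Setoid.ker fun q => (M.start q).Lang

/-- A class is accepting when it contains an accepting state lying on a cycle; a class whose
accepting states are all transient must stay rejecting. -/
def langQuotient : DBA A (Quotient M.langSetoid) where
  delta c a := Quotient.map' (M.delta · a) (fun _ _ h => M.lang_delta_congr h a) c
  init := Quotient.mk _ M.init
  F := {c | ∃ p ∈ M.F, M.Reach p p ∧ Quotient.mk _ p = c}

theorem langQuotient_mk_eq_mk_iff {p q : Q} :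
    (Quotient.mk M.langSetoid p = Quotient.mk _ q) ↔ (M.start p).Lang = (M.start q).Lang :=
  Quotient.eq

theorem langQuotient_deltaStar_mk (p : Q) (u : List A) :
    M.langQuotient.deltaStar (Quotient.mk _ p) u = Quotient.mk _ (M.deltaStar p u) := by
  induction u generalizing p with
  | nil => rfl
  | cons a u ih => exact ih (M.delta p a)

theorem langQuotient_run_mk (p : Q) (w : ℕ → A) (n : ℕ) :
    (M.langQuotient.start (Quotient.mk _ p)).run w n = Quotient.mk _ ((M.start p).run w n) := by
  induction n with
  | zero => rfl
  | succ n ih => exact congrArg (M.langQuotient.delta · (w n)) ih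

theorem Weak.lang_langQuotient_start {M : DBA A Q} [Finite Q] (hweak : M.Weak) (p : Q) :
    (M.langQuotient.start (Quotient.mk _ p)).Lang = (M.start p).Lang := by
  ext w
  simp only [Lang, Set.mem_ofPred_eq, accepts_iff_frequently, langQuotient_run_mk]
  constructor
  · rintro ⟨-, ⟨q, hq, hqq, rfl⟩, hfreq⟩
    have hclass : ∃ᶠ n in atTop, ∃ t, Quotient.mk _ t = Quotient.mk M.langSetoid q ∧
        (M.start p).run w n = t := hfreq.mono fun n h => ⟨_, h, rfl⟩
    obtain ⟨t, ht⟩ := frequently_exists.1 hclass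
    obtain ⟨htq, ht⟩ := frequently_and_distrib_left.1 ht
    have htt := (M.start p).reach_of_frequently_run ht ht
    exact ⟨t, hweak.mem_F_of_lang_eq hq hqq (by simpa using htt)
      ((M.langQuotient_mk_eq_mk_iff).1 htq), ht⟩
  · rintro ⟨f, hf, hfreq⟩
    have hff := (M.start p).reach_of_frequently_run hfreq hfreq
    exact ⟨_, ⟨f, hf, by simpa using hff, rfl⟩, hfreq.mono fun n h => by rw [h]⟩

theorem Weak.langQuotient {M : DBA A Q} [Finite Q] (hweak : M.Weak) : M.langQuotient.Weak := by
  rintro - ⟨p, hp, hpp, rfl⟩ - ⟨u, hu, rfl⟩ ⟨v, hv, hcycle⟩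
  rw [langQuotient_deltaStar_mk, langQuotient_deltaStar_mk, ← deltaStar_append,
    ← langQuotient_deltaStar_mk] at hcycle
  rw [langQuotient_deltaStar_mk]
  obtain ⟨k, m, hm, hper⟩ := exists_isPeriodicPt_iterate (M.deltaStar · (u ++ v)) p
  have hrp : Quotient.mk M.langSetoid ((M.deltaStar · (u ++ v))^[k] p) = Quotient.mk _ p := by
    rw [iterate_deltaStar, ← langQuotient_deltaStar_mk, ← iterate_deltaStar]
    exact (show IsFixedPt (M.langQuotient.deltaStar · (u ++ v)) _ from hcycle).iterate k
  generalize (M.deltaStar · (u ++ v))^[k] p = r at hper hrp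
  have hrr : M.Reach r r := by
    have := M.reach_iterate_deltaStar (x := u ++ v) (by simp [hu]) r hm
    rwa [hper.eq] at this
  have hrF : r ∈ M.F := hweak.mem_F_of_lang_eq hp hpp hrr ((M.langQuotient_mk_eq_mk_iff).1 hrp)
  -- the cycle `(u ++ v)^m` through `r` passes through `δ*(r, u)`
  have hback : M.Reach (M.deltaStar r u) r := by
    obtain ⟨m, rfl⟩ := Nat.exists_eq_add_one_of_ne_zero hm.ne'
    refine ⟨v ++ (List.replicate m (u ++ v)).flatten, by simp [hv], ?_⟩
    have := hper.eq
    rwa [iterate_deltaStar, List.replicate_succ, List.flatten_cons, List.append_assoc,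
      deltaStar_append] at this
  have hforth : M.Reach r (M.deltaStar r u) := ⟨u, hu, rfl⟩
  refine ⟨M.deltaStar r u, hweak r hrF _ hforth hback, hback.trans hforth, ?_⟩
  rw [← langQuotient_deltaStar_mk, hrp, langQuotient_deltaStar_mk]

theorem Weak.langQuotient_minimal {M : DBA A Q} [Finite Q] (hweak : M.Weak) :
    M.langQuotient.Minimal := by
  rintro ⟨p⟩ ⟨q⟩ hne hL
  refine hne ((M.langQuotient_mk_eq_mk_iff).2 ?_)
  rwa [← hweak.lang_langQuotient_start, ← hweak.lang_langQuotient_start]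

end DBA

theorem stmt1_general {A Q : Type} [Fintype Q] (M : DBA A Q)
    (hweak : M.Weak) (hacc : ∀ q : Q, ∃ u : List A, M.deltaStar M.init u = q) :
    ∃ (Q' : Type) (_ : Fintype Q') (M' : DBA A Q') (μ : Q → Q'),
      M'.Weak ∧ M'.Minimal ∧
      (∀ q' : Q', ∃ u : List A, M'.deltaStar M'.init u = q') ∧
      Function.Surjective μ ∧
      μ M.init = M'.init ∧
      (∀ q : Q, (M.start q).Lang = (M'.start (μ q)).Lang) ∧
      M'.Lang = M.Lang := by
  refine ⟨_, Fintype.ofFinite _, M.langQuotient, Quotient.mk _, hweak.langQuotient,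
    hweak.langQuotient_minimal, ?_, Quotient.mk_surjective, rfl,
    fun q => (hweak.lang_langQuotient_start q).symm, hweak.lang_langQuotient_start M.init⟩
  rintro ⟨q⟩
  obtain ⟨u, rfl⟩ := hacc q
  exact ⟨u, M.langQuotient_deltaStar_mk M.init u⟩

/-- existence of a minimal quotient of a weak deterministic Büchi
automaton whose states are all accessible. -/
theorem stmt1 {A Q : Type} [Fintype A] [Fintype Q] (M : DBA A Q)
    (hweak : M.Weak) (hacc : ∀ q : Q, ∃ u : List A, M.deltaStar M.init u = q) :
    ∃ (Q' : Type) (_ : Fintype Q') (M' : DBA A Q') (μ : Q → Q'),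
      M'.Weak ∧ M'.Minimal ∧
      (∀ q' : Q', ∃ u : List A, M'.deltaStar M'.init u = q') ∧
      Function.Surjective μ ∧
      μ M.init = M'.init ∧
      (∀ q : Q, (M.start q).Lang = (M'.start (μ q)).Lang) ∧
      M'.Lang = M.Lang :=
  stmt1_general M hweak hacc
end

section
/- If 𝒜 is a weak deterministic Büchi automaton over the alphabet Σ ∪ {⋆}, then for every digit z ∈ Σ and every d ≥ 1, the deterministic Büchi automaton 𝒜^{seq z} is weak. -/
namespace DBA

variable {A B Q S : Type}

def ProjectsOnto (N : DBA B S) (M : DBA A Q) (π : S → Option Q) : Prop :=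
  ∀ s b q', π (N.delta s b) = some q' → ∃ q, π s = some q ∧ ∃ a, M.delta q a = q'

variable {N : DBA B S} {M : DBA A Q} {π : S → Option Q}

lemma ProjectsOnto.exists_deltaStar (hπ : N.ProjectsOnto M π) :
    ∀ (u : List B) (s : S) (q' : Q), π (N.deltaStar s u) = some q' →
      ∃ q, π s = some q ∧ ∃ v : List A, v.length = u.length ∧ M.deltaStar q v = q'
  | [], s, q', h => ⟨q', h, [], rfl, rfl⟩
  | b :: u, s, q', h => by
    obtain ⟨q₁, hq₁, v, hv, hvq⟩ := hπ.exists_deltaStar u (N.delta s b) q' h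
    obtain ⟨q, hq, a, rfl⟩ := hπ s b q₁ hq₁
    exact ⟨q, hq, a :: v, by simp [hv], hvq⟩

lemma ProjectsOnto.reach (hπ : N.ProjectsOnto M π) {s s' : S} {q' : Q}
    (hs' : π s' = some q') (h : N.Reach s s') : ∃ q, π s = some q ∧ M.Reach q q' := by
  obtain ⟨u, hu, rfl⟩ := h
  obtain ⟨q, hq, v, hv, hvq⟩ := hπ.exists_deltaStar u s q' hs'
  exact ⟨q, hq, v, by rintro rfl; exact hu (List.length_eq_zero_iff.mp hv.symm), hvq⟩

lemma ProjectsOnto.weak (hπ : N.ProjectsOnto M π) (hF : N.F = {s | ∃ q ∈ M.F, π s = some q})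
    (hM : M.Weak) : N.Weak := by
  intro s hs s' hss' hs's
  rw [hF] at hs ⊢
  obtain ⟨q, hqF, hq⟩ := hs
  obtain ⟨q', hq', hq'q⟩ := hπ.reach hq hs's
  obtain ⟨_, hq₀, hqq'⟩ := hπ.reach hq' hss'
  cases hq.symm.trans hq₀
  exact ⟨q', hM q hqF q' hqq' hq'q, hq'⟩

end DBA

lemma seqDBA_projectsOnto {Q : Type} {b : ℕ} (d : ℕ) (hd : 0 < d) (M : DBA (Option (Fin b)) Q)
    (z : Fin b) : (seqDBA d hd M z).ProjectsOnto M (Option.map Prod.fst) := by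
  rintro (_ | ⟨q, i⟩) x q' h
  · simp [seqDBA] at h
  · refine ⟨q, rfl, ?_⟩
    rcases x with _ | _ | a
    · exact ⟨none, by simpa [seqDBA] using h⟩
    · have : (i : ℕ) = d - 1 ∧ M.delta q (some z) = q' := by
        simpa [seqDBA, apply_ite] using h
      exact ⟨some z, this.2⟩
    · have : (i : ℕ) + 1 < d ∧ M.delta q (some a) = q' := by
        simpa [seqDBA, apply_dite] using h
      exact ⟨some a, this.2⟩

theorem stmt5_general {Q : Type} {b : ℕ}
    (M : DBA (Option (Fin b)) Q) (hweak : M.Weak) (z : Fin b) (d : ℕ) (hd : 0 < d) :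
    (seqDBA d hd M z).Weak := by
  refine (seqDBA_projectsOnto d hd M z).weak ?_ hweak
  ext s
  simp [seqDBA, eq_comm]

/-- if `𝒜` is weak then `𝒜^{seq z}` is weak. -/
theorem stmt5 {Q : Type} [Fintype Q] {b : ℕ} (hb : 2 ≤ b)
    (M : DBA (Option (Fin b)) Q) (hweak : M.Weak) (z : Fin b) (d : ℕ) (hd : 0 < d) :
    (seqDBA d hd M z).Weak :=
  stmt5_general M hweak z d hd
end

section
/- Let 𝒜 be a minimal weak deterministic Büchi automaton over the alphabet Σ^d ∪ {⋆} such that L(𝒜) ⊆ (Σ^d)^*⋆(Σ^d)^ω and δ(q₀,(0,…,0)) = q₀. Then the following are equivalent: (1) L(𝒜) is saturated; (2) for all words 𝐮⋆𝐰 and 𝐮'⋆𝐰' in (Σ^d)^*⋆(Σ^d)^ω with |𝐮| = |𝐮'| that encode the same vector of reals, if 𝒜 accepts 𝐮⋆𝐰 then 𝒜 accepts 𝐮'⋆𝐰'; (3) for all words 𝐮⋆𝐰 and 𝐮'⋆𝐰' in (Σ^d)^*⋆(Σ^d)^ω with |𝐮| = |𝐮'| that encode the same vector of reals and differ in exactly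 one component (there is exactly one index f with (u_f, w_f) ≠ (u'_f, w'_f)), if 𝒜 accepts 𝐮⋆𝐰 then 𝒜 accepts 𝐮'⋆𝐰'. -/
/-!
(1) ⇒ (2) ⇒ (3) is immediate.

(2) ⇒ (1): since `δ(q₀, 0…0) = q₀`, prefixing leading zero letters to the integer part changes
neither the run of `𝒜` after the prefix nor the encoded vector, so two encodings of the same
vector can first be padded to integer parts of equal length.

(3) ⇒ (2): given encodings `𝐮⋆𝐰` and `𝐮'⋆𝐰'` of the same vector with `|𝐮| = |𝐮'|`, the hybrid
word taking its first `k` components from `𝐮'⋆𝐰'` and the others from `𝐮⋆𝐰` still encodes that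
vector, and consecutive hybrids are equal or differ in exactly one component.
-/

section Conditions

variable {b d : ℕ}

def SaturatedOnEqualLength (L : Set (ℕ → Option (Fin d → Fin b))) : Prop :=
  ∀ (u : List (Fin d → Fin b)) (w : ℕ → Fin d → Fin b)
    (u' : List (Fin d → Fin b)) (w' : ℕ → Fin d → Fin b),
    u.length = u'.length → vecVal u w = vecVal u' w' → encWord u w ∈ L → encWord u' w' ∈ L

def AgreeAt (f : Fin d) (u u' : List (Fin d → Fin b)) (w w' : ℕ → Fin d → Fin b) : Prop :=
  u.map (fun t => t f) = u'.map (fun t => t f) ∧ (fun n => w n f) = (fun n => w' n f)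

def SaturatedOnSingleComponent (L : Set (ℕ → Option (Fin d → Fin b))) : Prop :=
  ∀ (u : List (Fin d → Fin b)) (w : ℕ → Fin d → Fin b)
    (u' : List (Fin d → Fin b)) (w' : ℕ → Fin d → Fin b),
    u.length = u'.length → vecVal u w = vecVal u' w' → (∃! f, ¬ AgreeAt f u u' w w') →
    encWord u w ∈ L → encWord u' w' ∈ L

end Conditions

namespace DBA

variable {A Q : Type}

lemma accepts_iff_of_run_eq_init (M : DBA A Q) {x y : ℕ → A} (k : ℕ)
    (hinit : M.run x k = M.init) (hshift : ∀ n, x (k + n) = y n) :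
    M.Accepts x ↔ M.Accepts y := by
  have hrun : ∀ n, M.run x (k + n) = M.run y n := by
    intro n
    induction n with
    | zero => exact hinit
    | succ n ih => exact (congrArg₂ M.delta ih (hshift n) :)
  constructor
  · rintro ⟨q, hq, hinf⟩
    refine ⟨q, hq, fun N => ?_⟩
    obtain ⟨n, hn, hqn⟩ := hinf (k + N)
    refine ⟨n - k, by omega, ?_⟩
    rwa [← hrun, Nat.add_sub_cancel' (by omega)]
  · rintro ⟨q, hq, hinf⟩
    refine ⟨q, hq, fun N => ?_⟩
    obtain ⟨n, hn, hqn⟩ := hinf N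
    exact ⟨k + n, by omega, by rwa [hrun]⟩

lemma run_eq_init_of_forall_lt (M : DBA A Q) {a : A} (ha : M.delta M.init a = M.init)
    {x : ℕ → A} {m : ℕ} (hx : ∀ j < m, x j = a) : M.run x m = M.init := by
  induction m with
  | zero => rfl
  | succ m ih =>
    change M.delta (M.run x m) (x m) = M.init
    rw [ih fun j hj => hx j (by omega), hx m (by omega), ha]

end DBA

section Padding

variable {A : Type} {b d : ℕ}

lemma cat_of_lt (u : List A) (w : ℕ → A) {j : ℕ} (hj : j < u.length) : cat u w j = u[j] := by
  simp [cat, hj]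

lemma cat_length_add (u : List A) (w : ℕ → A) (n : ℕ) : cat u w (u.length + n) = w n := by
  simp [cat]

lemma cat_append (p u : List A) (w : ℕ → A) : cat (p ++ u) w = cat p (cat u w) := by
  funext n
  simp only [cat, List.get_eq_getElem, List.length_append]
  by_cases hp : n < p.length
  · rw [dif_pos (by omega), dif_pos hp, List.getElem_append_left hp]
  rw [dif_neg hp]
  by_cases hu : n < p.length + u.length
  · rw [dif_pos hu, dif_pos (by omega), List.getElem_append_right (by omega)]
  · rw [dif_neg hu, dif_neg (by omega), Nat.sub_sub]

lemma encWord_append (p u : List (Fin d → Fin b)) (w : ℕ → Fin d → Fin b) :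
    encWord (p ++ u) w = cat (p.map some) (encWord u w) := by
  simp only [encWord, List.map_append, List.append_assoc, cat_append]

lemma natVal_cons_of_val_eq_zero {z : Fin b} (hz : (z : ℕ) = 0) (v : List (Fin b)) :
    natVal b (z :: v) = natVal b v := by
  simp only [natVal, List.length_cons, Fin.sum_univ_succ, List.get_eq_getElem]
  simp only [Fin.val_zero, List.getElem_cons_zero, hz, Nat.cast_zero, zero_mul, zero_add,
    Fin.val_succ, List.getElem_cons_succ]
  refine Finset.sum_congr rfl fun i _ => ?_
  congr 2
  omega

lemma natVal_replicate_append {z : Fin b} (hz : (z : ℕ) = 0) (m : ℕ) (v : List (Fin b)) :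
    natVal b (List.replicate m z ++ v) = natVal b v := by
  induction m with
  | zero => rfl
  | succ m ih => rw [List.replicate_succ, List.cons_append, natVal_cons_of_val_eq_zero hz, ih]

lemma vecVal_replicate_append {z : Fin d → Fin b} (hz : ∀ i, (z i : ℕ) = 0) (m : ℕ)
    (u : List (Fin d → Fin b)) (w : ℕ → Fin d → Fin b) :
    vecVal (List.replicate m z ++ u) w = vecVal u w := by
  funext i
  simp only [vecVal, List.map_append, List.map_replicate, natVal_replicate_append (hz i)]

lemma encWord_replicate_append_mem_lang_iff {Q : Type} (M : DBA (Option (Fin d → Fin b)) Q)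
    {z : Fin d → Fin b} (hinit : M.delta M.init (some z) = M.init) (m : ℕ)
    (u : List (Fin d → Fin b)) (w : ℕ → Fin d → Fin b) :
    encWord (List.replicate m z ++ u) w ∈ M.Lang ↔ encWord u w ∈ M.Lang := by
  rw [encWord_append]
  refine M.accepts_iff_of_run_eq_init m (M.run_eq_init_of_forall_lt hinit fun j hj => ?_)
    fun n => ?_
  · rw [cat_of_lt _ _ (by simpa using hj)]
    simp
  · simpa using cat_length_add ((List.replicate m z).map some) (encWord u w) n

theorem saturated_of_saturatedOnEqualLength {Q : Type} (M : DBA (Option (Fin d → Fin b)) Q)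
    {z : Fin d → Fin b} (hz : ∀ i, (z i : ℕ) = 0) (hinit : M.delta M.init (some z) = M.init)
    (h : SaturatedOnEqualLength M.Lang) : Saturated M.Lang := by
  intro u w u' w' hval hmem
  rw [← encWord_replicate_append_mem_lang_iff M hinit (u.length - u'.length)]
  rw [← encWord_replicate_append_mem_lang_iff M hinit (u'.length - u.length)] at hmem
  refine h _ _ _ _ (by simp; omega) ?_ hmem
  rwa [vecVal_replicate_append hz, vecVal_replicate_append hz]

end Padding

section Hybrid

variable {b d : ℕ}

lemma eq_of_forall_agreeAt {u u' : List (Fin d → Fin b)} {w w' : ℕ → Fin d → Fin b}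
    (hlen : u.length = u'.length) (h : ∀ f, AgreeAt f u u' w w') : u = u' ∧ w = w' := by
  refine ⟨List.ext_getElem hlen fun j hj hj' => funext fun f => ?_,
    funext fun n => funext fun f => congrFun (h f).2 n⟩
  have hj_map := List.getElem_of_eq (h f).1 (by simpa using hj)
  simpa only [List.getElem_map] using hj_map

def mixTuple (k : ℕ) (t t' : Fin d → Fin b) : Fin d → Fin b :=
  fun i => if (i : ℕ) < k then t' i else t i

lemma mixTuple_zero (t t' : Fin d → Fin b) : mixTuple 0 t t' = t := rfl

lemma mixTuple_of_le {k : ℕ} (hk : d ≤ k) (t t' : Fin d → Fin b) : mixTuple k t t' = t' :=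
  funext fun i => if_pos (lt_of_lt_of_le i.2 hk)

def mixList (k : ℕ) (u u' : List (Fin d → Fin b)) : List (Fin d → Fin b) :=
  List.zipWith (mixTuple k) u u'

def mixSeq (k : ℕ) (w w' : ℕ → Fin d → Fin b) : ℕ → Fin d → Fin b :=
  fun n => mixTuple k (w n) (w' n)

variable {u u' : List (Fin d → Fin b)} {w w' : ℕ → Fin d → Fin b}

lemma length_mixList (k : ℕ) (hlen : u.length = u'.length) :
    (mixList k u u').length = u.length := by
  simp [mixList, hlen]

lemma map_mixList_apply (k : ℕ) (hlen : u.length = u'.length) (f : Fin d) :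
    (mixList k u u').map (fun t => t f) =
      if (f : ℕ) < k then u'.map (fun t => t f) else u.map (fun t => t f) := by
  split_ifs with hf <;>
    exact List.ext_getElem (by simp [mixList]; omega) fun j _ _ => by simp [mixList, mixTuple, hf]

lemma mixSeq_apply (k : ℕ) (f : Fin d) :
    (fun n => mixSeq k w w' n f) =
      if (f : ℕ) < k then (fun n => w' n f) else (fun n => w n f) := by
  split_ifs with hf <;> simp [mixSeq, mixTuple, hf]

lemma agreeAt_mix_mix (hlen : u.length = u'.length) {f : Fin d} {j k : ℕ}
    (hjk : (f : ℕ) < j ↔ (f : ℕ) < k) :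
    AgreeAt f (mixList j u u') (mixList k u u') (mixSeq j w w') (mixSeq k w w') := by
  simp only [AgreeAt, map_mixList_apply _ hlen, mixSeq_apply, hjk, and_self]

lemma agreeAt_mix_succ_iff (hlen : u.length = u'.length) {k : ℕ} (hk : k < d) :
    AgreeAt ⟨k, hk⟩ (mixList k u u') (mixList (k + 1) u u') (mixSeq k w w') (mixSeq (k + 1) w w')
      ↔ AgreeAt ⟨k, hk⟩ u u' w w' := by
  simp only [AgreeAt, map_mixList_apply _ hlen, mixSeq_apply, lt_irrefl, Nat.lt_succ_self,
    if_true, if_false]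

lemma mixList_zero (hlen : u.length = u'.length) : mixList 0 u u' = u :=
  List.ext_getElem (length_mixList 0 hlen) fun j _ _ => by
    simp [mixList, mixTuple_zero]

lemma mixSeq_zero : mixSeq 0 w w' = w := rfl

lemma mixList_of_le {k : ℕ} (hk : d ≤ k) (hlen : u.length = u'.length) : mixList k u u' = u' :=
  List.ext_getElem (by rw [length_mixList k hlen, hlen]) fun j _ _ => by
    simp [mixList, mixTuple_of_le hk]

lemma mixSeq_of_le {k : ℕ} (hk : d ≤ k) : mixSeq k w w' = w' :=
  funext fun n => mixTuple_of_le hk (w n) (w' n)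

lemma vecVal_mix (k : ℕ) (hlen : u.length = u'.length) (hval : vecVal u w = vecVal u' w') :
    vecVal (mixList k u u') (mixSeq k w w') = vecVal u w := by
  funext f
  simp only [vecVal, map_mixList_apply k hlen, mixSeq_apply]
  split_ifs
  · exact (congrFun hval f).symm
  · rfl

lemma mix_succ_mem {L : Set (ℕ → Option (Fin d → Fin b))} (hL : SaturatedOnSingleComponent L)
    (hlen : u.length = u'.length) (hval : vecVal u w = vecVal u' w') {k : ℕ} (hk : k < d)
    (hmem : encWord (mixList k u u') (mixSeq k w w') ∈ L) :
    encWord (mixList (k + 1) u u') (mixSeq (k + 1) w w') ∈ L := by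
  have hsame : ∀ f : Fin d, f ≠ ⟨k, hk⟩ →
      AgreeAt f (mixList k u u') (mixList (k + 1) u u') (mixSeq k w w') (mixSeq (k + 1) w w') :=
    fun f hf => agreeAt_mix_mix hlen (by have : (f : ℕ) ≠ k := fun h => hf (Fin.ext h); omega)
  by_cases hagree : AgreeAt ⟨k, hk⟩ u u' w w'
  · obtain ⟨hu, hw⟩ := eq_of_forall_agreeAt
      (by rw [length_mixList k hlen, length_mixList (k + 1) hlen]) fun f =>
        if hf : f = ⟨k, hk⟩ then hf ▸ (agreeAt_mix_succ_iff hlen hk).mpr hagree else hsame f hf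
    rwa [← hu, ← hw]
  · refine hL _ _ _ _ (by rw [length_mixList k hlen, length_mixList (k + 1) hlen])
      (by rw [vecVal_mix k hlen hval, vecVal_mix (k + 1) hlen hval])
      ⟨⟨k, hk⟩, mt (agreeAt_mix_succ_iff hlen hk).mp hagree, fun f hf => ?_⟩ hmem
    by_contra hne
    exact hf (hsame f hne)

theorem saturatedOnEqualLength_of_saturatedOnSingleComponent
    {L : Set (ℕ → Option (Fin d → Fin b))} (hL : SaturatedOnSingleComponent L) :
    SaturatedOnEqualLength L := by
  intro u w u' w' hlen hval hmem
  have hmix : ∀ k ≤ d, encWord (mixList k u u') (mixSeq k w w') ∈ L := by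
    intro k hk
    induction k with
    | zero => rwa [mixList_zero hlen, mixSeq_zero]
    | succ k ih => exact mix_succ_mem hL hlen hval (by omega) (ih (by omega))
  simpa only [mixList_of_le le_rfl hlen, mixSeq_of_le le_rfl] using hmix d le_rfl

end Hybrid

/-- equivalence of saturation with its restrictions to words whose
natural parts have the same length, resp. which moreover differ in exactly one
component. -/
theorem stmt11 {Q : Type} {b d : ℕ} (hb : 2 ≤ b)
    (M : DBA (Option (Fin d → Fin b)) Q)
    (hinit : M.delta M.init (some fun _ => (⟨0, by omega⟩ : Fin b)) = M.init) :
    (Saturated M.Lang ↔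
      (∀ (u : List (Fin d → Fin b)) (w : ℕ → Fin d → Fin b)
         (u' : List (Fin d → Fin b)) (w' : ℕ → Fin d → Fin b),
        u.length = u'.length → vecVal u w = vecVal u' w' →
        encWord u w ∈ M.Lang → encWord u' w' ∈ M.Lang)) ∧
    ((∀ (u : List (Fin d → Fin b)) (w : ℕ → Fin d → Fin b)
        (u' : List (Fin d → Fin b)) (w' : ℕ → Fin d → Fin b),
        u.length = u'.length → vecVal u w = vecVal u' w' →
        encWord u w ∈ M.Lang → encWord u' w' ∈ M.Lang) ↔
      (∀ (u : List (Fin d → Fin b)) (w : ℕ → Fin d → Fin b)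
         (u' : List (Fin d → Fin b)) (w' : ℕ → Fin d → Fin b),
        u.length = u'.length → vecVal u w = vecVal u' w' →
        (∃! f : Fin d, ¬ (u.map (fun t => t f) = u'.map (fun t => t f) ∧
            (fun n => w n f) = (fun n => w' n f))) →
        encWord u w ∈ M.Lang → encWord u' w' ∈ M.Lang)) :=
  ⟨⟨fun hsat u w u' w' _ => hsat u w u' w',
      saturated_of_saturatedOnEqualLength M (fun _ => rfl) hinit⟩,
    ⟨fun h u w u' w' hlen hval _ => h u w u' w' hlen hval,
      saturatedOnEqualLength_of_saturatedOnSingleComponent⟩⟩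
end
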